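/- Given nonnegative integers b, c with n ≡ b + c (mod 2), the number of walks of length n with steps ±1 starting at 0, whose minimum value is exactly -b and whose final height is c - b, equals C(n; b+c) = ((b+c+1)/(n+1)) · binom(n+1, (n-b-c)/2). -/
import Mathlib

/-- Partial sum of the first `p` increments of a walk `w`. -/
def psum {m : ℕ} (w : Fin m → ℤ) (p : ℕ) : ℤ :=
  ∑ i ∈ Finset.univ.filter (fun i : Fin m => i.val < p), w i

def S (n b c : ℕ) : Set (Fin n → ℤ) :=
  {w : Fin n → ℤ |
    (∀ i, w i = 1 ∨ w i = -1) ∧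
      (∀ p ≤ n, -(b : ℤ) ≤ psum w p) ∧ (∃ p ≤ n, psum w p = -(b : ℤ)) ∧
        psum w n = (c : ℤ) - (b : ℤ)}

lemma psum_zero {m : ℕ} (w : Fin m → ℤ) : psum w 0 = 0 := by simp [psum]

lemma psum_cons {n : ℕ} (ε : ℤ) (v : Fin n → ℤ) (p : ℕ) :
    psum (Fin.cons ε v) (p+1) = ε + psum v p := by
  simp [psum, Finset.sum_filter, Fin.sum_univ_succ, Nat.succ_lt_succ_iff]

lemma psum_fin_zero (w : Fin 0 → ℤ) (p : ℕ) : psum w p = 0 := by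
  simp [psum]

lemma S_finite (n b c : ℕ) : (S n b c).Finite := by
  have h : S n b c ⊆ Set.univ.pi (fun _ : Fin n => ({1, -1} : Set ℤ)) := by
    intro w hw i _
    rcases hw.1 i with h | h <;> simp [h]
  exact (Set.Finite.pi (fun _ => (Set.toFinite _))).subset h

lemma mem_S_cons {n : ℕ} (ε : ℤ) (v : Fin n → ℤ) (b c : ℕ) :
    Fin.cons ε v ∈ S (n+1) b c ↔
      (ε = 1 ∨ ε = -1) ∧ (∀ i, v i = 1 ∨ v i = -1) ∧
        (∀ p ≤ n, -(b:ℤ) ≤ ε + psum v p) ∧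
        (b = 0 ∨ ∃ p ≤ n, ε + psum v p = -(b:ℤ)) ∧
        ε + psum v n = (c:ℤ) - b := by
  simp only [S, Set.mem_setOf_eq]
  constructor
  · rintro ⟨h1, h2, h3, h4⟩
    refine ⟨by simpa using h1 0, fun i => by simpa using h1 i.succ, ?_, ?_, ?_⟩
    · intro p hp
      have := h2 (p+1) (by omega)
      rwa [psum_cons] at this
    · obtain ⟨p, hp, hp2⟩ := h3
      cases p with
      | zero => left; rw [psum_zero] at hp2; omega
      | succ q => right; exact ⟨q, by omega, by rwa [psum_cons] at hp2⟩
    · rwa [psum_cons] at h4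
  · rintro ⟨he, h1, h2, h3, h4⟩
    refine ⟨?_, ?_, ?_, ?_⟩
    · intro i
      refine Fin.cases ?_ ?_ i
      · simpa using he
      · intro j; simpa using h1 j
    · intro p hp
      cases p with
      | zero => rw [psum_zero]; omega
      | succ q => rw [psum_cons]; exact h2 q (by omega)
    · rcases h3 with h3 | ⟨p, hp, hp2⟩
      · exact ⟨0, by omega, by rw [psum_zero]; omega⟩
      · exact ⟨p+1, by omega, by rw [psum_cons]; exact hp2⟩
    · rw [psum_cons]; exact h4

lemma mem_S_iff {n b c : ℕ} (v : Fin n → ℤ) :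
    v ∈ S n b c ↔
      (∀ i, v i = 1 ∨ v i = -1) ∧
        (∀ p ≤ n, -(b : ℤ) ≤ psum v p) ∧ (∃ p ≤ n, psum v p = -(b : ℤ)) ∧
          psum v n = (c : ℤ) - (b : ℤ) := Iff.rfl

lemma cons_neg_mem_iff {n : ℕ} (b c : ℕ) (v : Fin n → ℤ) :
    Fin.cons (-1:ℤ) v ∈ S (n+1) (b+1) c ↔ v ∈ S n b c := by
  rw [mem_S_cons, mem_S_iff]
  constructor
  · rintro ⟨-, h1, h2, h3, h4⟩
    refine ⟨h1, fun p hp => by have := h2 p hp; push_cast at this ⊢; omega, ?_, ?_⟩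
    · rcases h3 with h3 | ⟨p, hp, hp2⟩
      · omega
      · exact ⟨p, hp, by push_cast at hp2 ⊢; omega⟩
    · push_cast at h4 ⊢; omega
  · rintro ⟨h1, h2, ⟨p, hp, hp2⟩, h4⟩
    refine ⟨Or.inr rfl, h1, fun q hq => by have := h2 q hq; push_cast at this ⊢; omega, ?_, ?_⟩
    · exact Or.inr ⟨p, hp, by push_cast at hp2 ⊢; omega⟩
    · push_cast at h4 ⊢; omega

lemma cons_one_mem_iff {n : ℕ} (b c : ℕ) (v : Fin n → ℤ) :
    Fin.cons (1:ℤ) v ∈ S (n+1) (b+1) c ↔ v ∈ S n (b+2) c := by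
  rw [mem_S_cons, mem_S_iff]
  constructor
  · rintro ⟨-, h1, h2, h3, h4⟩
    refine ⟨h1, fun p hp => by have := h2 p hp; push_cast at this ⊢; omega, ?_, ?_⟩
    · rcases h3 with h3 | ⟨p, hp, hp2⟩
      · omega
      · exact ⟨p, hp, by push_cast at hp2 ⊢; omega⟩
    · push_cast at h4 ⊢; omega
  · rintro ⟨h1, h2, ⟨p, hp, hp2⟩, h4⟩
    refine ⟨Or.inl rfl, h1, fun q hq => by have := h2 q hq; push_cast at this ⊢; omega, ?_, ?_⟩
    · exact Or.inr ⟨p, hp, by push_cast at hp2 ⊢; omega⟩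
    · push_cast at h4 ⊢; omega

lemma cons_neg_not_mem_zero {n : ℕ} (c : ℕ) (v : Fin n → ℤ) :
    Fin.cons (-1:ℤ) v ∉ S (n+1) 0 c := by
  rw [mem_S_cons]
  rintro ⟨-, -, h2, -, -⟩
  have := h2 0 (by omega)
  rw [psum_zero] at this
  omega

lemma cons_one_mem_iff_zero {n : ℕ} (c : ℕ) (v : Fin n → ℤ) :
    Fin.cons (1:ℤ) v ∈ S (n+1) 0 (c+1) ↔ (v ∈ S n 1 (c+1) ∨ v ∈ S n 0 c) := by
  rw [mem_S_cons, mem_S_iff, mem_S_iff]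
  constructor
  · rintro ⟨-, h1, h2, -, h4⟩
    by_cases hh : ∃ p ≤ n, psum v p = -1
    · left
      obtain ⟨p, hp, hp2⟩ := hh
      exact ⟨h1, fun q hq => by have := h2 q hq; push_cast at this ⊢; omega,
        ⟨p, hp, by push_cast; omega⟩, by push_cast at h4 ⊢; omega⟩
    · right
      push_neg at hh
      refine ⟨h1, ?_, ⟨0, by omega, by rw [psum_zero]; norm_num⟩, by push_cast at h4 ⊢; omega⟩
      intro q hq
      have ha := h2 q hq
      have hb := hh q hq
      push_cast at ha ⊢
      omega
  · rintro (⟨h1, h2, ⟨p, hp, hp2⟩, h4⟩ | ⟨h1, h2, h3, h4⟩)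
    · exact ⟨Or.inl rfl, h1, fun q hq => by have := h2 q hq; push_cast at this ⊢; omega,
        Or.inl rfl, by push_cast at h4 ⊢; omega⟩
    · exact ⟨Or.inl rfl, h1, fun q hq => by have := h2 q hq; push_cast at this ⊢; omega,
        Or.inl rfl, by push_cast at h4 ⊢; omega⟩

lemma cons_one_mem_iff_zz {n : ℕ} (v : Fin n → ℤ) :
    Fin.cons (1:ℤ) v ∈ S (n+1) 0 0 ↔ v ∈ S n 1 0 := by
  rw [mem_S_cons, mem_S_iff]
  constructor
  · rintro ⟨-, h1, h2, -, h4⟩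
    push_cast at h4
    refine ⟨h1, fun q hq => by have := h2 q hq; push_cast at this ⊢; omega,
      ⟨n, le_refl n, by push_cast; omega⟩, by push_cast; omega⟩
  · rintro ⟨h1, h2, h3, h4⟩
    push_cast at h4
    exact ⟨Or.inl rfl, h1, fun q hq => by have := h2 q hq; push_cast at this ⊢; omega,
      Or.inl rfl, by push_cast; omega⟩


def M : ℕ → ℕ → ℕ
  | 0, a => if a = 0 then 1 else 0
  | n+1, 0 => M n 1
  | n+1, a+1 => M n a + M n (a+2)

lemma M_zero (a : ℕ) : M 0 a = if a = 0 then 1 else 0 := rfl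
lemma M_succ_zero (n : ℕ) : M (n+1) 0 = M n 1 := rfl
lemma M_succ_succ (n a : ℕ) : M (n+1) (a+1) = M n a + M n (a+2) := rfl

lemma M_gt : ∀ n a, n < a → M n a = 0
  | 0, a, h => by rw [M_zero]; simp; omega
  | n+1, a+1, h => by
      rw [M_succ_succ, M_gt n a (by omega), M_gt n (a+2) (by omega)]

lemma M_diag : ∀ n, M n n = 1
  | 0 => rfl
  | n+1 => by rw [M_succ_succ, M_diag n, M_gt n (n+2) (by omega)]

lemma M_val : ∀ n a k, n = a + 2*(k+1) → M n a + Nat.choose n k = Nat.choose n (k+1)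
  | 0, a, k, h => by omega
  | n+1, 0, k, h => by
      rw [M_succ_zero]
      cases k with
      | zero =>
          have hn : n = 1 := by omega
          subst hn; decide
      | succ k' =>
          have h1 := M_val n 1 k' (by omega)
          have h2 : Nat.choose n (k'+1) = Nat.choose n (k'+2) := by
            rw [← Nat.choose_symm (show k'+2 ≤ n by omega)]
            congr 1
            omega
          rw [Nat.choose_succ_succ n (k'+1), Nat.choose_succ_succ n k']
          simp only [Nat.succ_eq_add_one, show k'+1+1 = k'+2 from rfl] at *
          omega
  | n+1, a+1, k, h => by
      rw [M_succ_succ]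
      cases k with
      | zero =>
          have hn : n = a + 2 := by omega
          have h1 := M_val n a 0 (by omega)
          have h2 : M n (a+2) = 1 := by rw [← hn]; exact M_diag n
          rw [Nat.choose_succ_succ n 0] at *
          simp [Nat.choose] at *
          omega
      | succ k' =>
          have h1 := M_val n a (k'+1) (by omega)
          have h2 := M_val n (a+2) k' (by omega)
          rw [Nat.choose_succ_succ n (k'+1), Nat.choose_succ_succ n k']
          simp only [Nat.succ_eq_add_one, show k'+1+1 = k'+2 from rfl] at *
          omega

lemma M_mul (n a k : ℕ) (h : n = a + 2*k) :
    (n+1) * M n a = (a+1) * Nat.choose (n+1) k := by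
  cases k with
  | zero =>
      have : n = a := by omega
      subst this
      simp [M_diag]
  | succ k' =>
      subst h
      have h1 := M_val (a + 2*(k'+1)) a k' rfl
      have h2 := Nat.choose_succ_right_eq (a + 2*(k'+1)) k'
      have h3 : a + 2*(k'+1) - k' = a + k' + 2 := by omega
      rw [h3] at h2
      rw [Nat.choose_succ_succ (a + 2*(k'+1)) k']
      simp only [Nat.succ_eq_add_one] at *
      zify at h1 h2 ⊢
      linear_combination ((a:ℤ) + 2*k' + 3) * h1 + 2 * h2

lemma S_succ_pos (n b c : ℕ) :
    S (n+1) (b+1) c = (Fin.cons (-1:ℤ) '' S n b c) ∪ (Fin.cons (1:ℤ) '' S n (b+2) c) := by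
  ext w
  constructor
  · intro hw
    have hcons : Fin.cons (w 0) (Fin.tail w) = w := Fin.cons_self_tail w
    rcases ((mem_S_iff w).mp hw).1 0 with h0 | h0
    · right
      exact ⟨Fin.tail w, (cons_one_mem_iff b c _).mp (by rwa [← h0, hcons]), by rw [← h0, hcons]⟩
    · left
      exact ⟨Fin.tail w, (cons_neg_mem_iff b c _).mp (by rwa [← h0, hcons]), by rw [← h0, hcons]⟩
  · rintro (⟨v, hv, rfl⟩ | ⟨v, hv, rfl⟩)
    · exact (cons_neg_mem_iff b c v).mpr hv
    · exact (cons_one_mem_iff b c v).mpr hv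

lemma S_succ_zero (n c : ℕ) :
    S (n+1) 0 (c+1) = Fin.cons (1:ℤ) '' (S n 1 (c+1) ∪ S n 0 c) := by
  ext w
  constructor
  · intro hw
    have hcons : Fin.cons (w 0) (Fin.tail w) = w := Fin.cons_self_tail w
    rcases ((mem_S_iff w).mp hw).1 0 with h0 | h0
    · exact ⟨Fin.tail w, (cons_one_mem_iff_zero c _).mp (by rwa [← h0, hcons]), by rw [← h0, hcons]⟩
    · exact absurd (by rwa [← h0, hcons] : Fin.cons (-1:ℤ) (Fin.tail w) ∈ S (n+1) 0 (c+1))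
        (cons_neg_not_mem_zero (c+1) _)
  · rintro ⟨v, hv, rfl⟩
    exact (cons_one_mem_iff_zero c v).mpr hv

lemma S_succ_zz (n : ℕ) :
    S (n+1) 0 0 = Fin.cons (1:ℤ) '' (S n 1 0) := by
  ext w
  constructor
  · intro hw
    have hcons : Fin.cons (w 0) (Fin.tail w) = w := Fin.cons_self_tail w
    rcases ((mem_S_iff w).mp hw).1 0 with h0 | h0
    · exact ⟨Fin.tail w, (cons_one_mem_iff_zz _).mp (by rwa [← h0, hcons]), by rw [← h0, hcons]⟩
    · exact absurd (by rwa [← h0, hcons] : Fin.cons (-1:ℤ) (Fin.tail w) ∈ S (n+1) 0 0)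
        (cons_neg_not_mem_zero 0 _)
  · rintro ⟨v, hv, rfl⟩
    exact (cons_one_mem_iff_zz v).mpr hv


lemma disj_cons_images {n : ℕ} (A B : Set (Fin n → ℤ)) :
    Disjoint (Fin.cons (-1:ℤ) '' A : Set (Fin (n+1) → ℤ))
      (Fin.cons (1:ℤ) '' B : Set (Fin (n+1) → ℤ)) := by
  rw [Set.disjoint_left]
  rintro w ⟨v, -, rfl⟩ ⟨u, -, hu⟩
  have := congrFun hu 0
  simp only [Fin.cons_zero] at this
  omega

lemma disj_S {n c : ℕ} : Disjoint (S n 1 (c+1)) (S n 0 c) := by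
  rw [Set.disjoint_left]
  intro v hv1 hv2
  obtain ⟨-, -, ⟨p, hp, hp2⟩, -⟩ := (mem_S_iff v).mp hv1
  obtain ⟨-, h2, -, -⟩ := (mem_S_iff v).mp hv2
  have := h2 p hp
  push_cast at this hp2
  omega

lemma S_card : ∀ n b c, (S n b c).ncard = M n (b+c)
  | 0, b, c => by
      by_cases hb : b = 0 ∧ c = 0
      · obtain ⟨rfl, rfl⟩ := hb
        have hu : S 0 0 0 = Set.univ := by
          ext w
          simp only [mem_S_iff, Set.mem_univ, iff_true]
          exact ⟨fun i => i.elim0, fun p _ => by rw [psum_fin_zero]; norm_num,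
            ⟨0, le_refl 0, by rw [psum_fin_zero]; norm_num⟩,
            by rw [psum_fin_zero]; norm_num⟩
        rw [hu, Set.ncard_univ, M_zero, if_pos rfl, Nat.card_unique]
      · have he : S 0 b c = ∅ := by
          ext w
          simp only [mem_S_iff, Set.mem_empty_iff_false, iff_false]
          rintro ⟨-, -, ⟨p, hp, hp2⟩, h4⟩
          rw [psum_fin_zero] at hp2 h4
          omega
        rw [he, Set.ncard_empty, M_zero, if_neg (by omega)]
  | n+1, b+1, c => by
      rw [S_succ_pos,
        Set.ncard_union_eq (disj_cons_images _ _)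
          ((S_finite n b c).image _) ((S_finite n (b+2) c).image _),
        Set.ncard_image_of_injective _ (Fin.cons_right_injective _),
        Set.ncard_image_of_injective _ (Fin.cons_right_injective _),
        S_card n b c, S_card n (b+2) c,
        show b+1+c = (b+c)+1 from by omega, M_succ_succ,
        show b+2+c = (b+c)+2 from by omega]
  | n+1, 0, c+1 => by
      rw [S_succ_zero,
        Set.ncard_image_of_injective _ (Fin.cons_right_injective _),
        Set.ncard_union_eq disj_S (S_finite n 1 (c+1)) (S_finite n 0 c),
        S_card n 1 (c+1), S_card n 0 c]
      rw [show (0:ℕ)+(c+1) = c+1 from by omega, M_succ_succ,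
        show (1:ℕ)+(c+1) = c+2 from by omega, show (0:ℕ)+c = c from by omega]
      omega
  | n+1, 0, 0 => by
      rw [S_succ_zz,
        Set.ncard_image_of_injective _ (Fin.cons_right_injective _),
        S_card n 1 0, show (1:ℕ)+0 = 1 from rfl, show (0:ℕ)+0 = 0 from rfl, M_succ_zero]

/-- The number of walks of length `n` with steps `±1` starting at `0`, with
minimum value exactly `-b` and final height `c - b`, equals
`C(n;b+c) = ((b+c+1)/(n+1))·binom(n+1,(n-b-c)/2)`. -/
theorem walk_min_end_count (n b c : ℕ) (hbc : b + c ≤ n) (hpar : n % 2 = (b + c) % 2) :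
    (n + 1) *
        {w : Fin n → ℤ |
            (∀ i, w i = 1 ∨ w i = -1) ∧
              (∀ p ≤ n, -(b : ℤ) ≤ psum w p) ∧ (∃ p ≤ n, psum w p = -(b : ℤ)) ∧
                psum w n = (c : ℤ) - (b : ℤ)}.ncard =
      (b + c + 1) * Nat.choose (n + 1) ((n - (b + c)) / 2) := by
  have hs : {w : Fin n → ℤ |
            (∀ i, w i = 1 ∨ w i = -1) ∧
              (∀ p ≤ n, -(b : ℤ) ≤ psum w p) ∧ (∃ p ≤ n, psum w p = -(b : ℤ)) ∧
                psum w n = (c : ℤ) - (b : ℤ)} = S n b c := rfl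
  rw [hs, S_card n b c]
  exact M_mul n (b+c) ((n - (b+c))/2) (by omega)
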